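/- arXiv:1102.0173 — 3 statements merged into one kernel-verified Lean document; each statement's English description precedes it below -/
import Mathlib

section
/- For every rational number p with 0 ≤ p ≤ 1, there exists a (randomized) announcement procedure on uniformly random families in {B,G}² such that the conditional probability of two boys given the announcement 'at least one is a boy' equals p. -/
inductive Gender | B | G deriving DecidableEq

instance : Fintype Gender := ⟨{Gender.B, Gender.G}, fun x => by cases x <;> simp⟩

open Finset

/-- The total announcement mass is `1`, which makes the conditional probability of two boys `p`. -/
def announceProb (p : ℚ) : Gender × Gender → ℚ
  | (.B, .B) => p
  | (.B, .G) => 1 - p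
  | _ => 0

theorem Gender.sum_univ {M : Type*} [AddCommMonoid M] (f : Gender → M) :
    ∑ g, f g = f .B + f .G :=
  sum_pair (by decide)

theorem Gender.sum_univ_prod {M : Type*} [AddCommMonoid M] (f : Gender × Gender → M) :
    ∑ x, f x = f (.B, .B) + f (.B, .G) + (f (.G, .B) + f (.G, .G)) := by
  simp only [Fintype.sum_prod_type, Gender.sum_univ]

theorem Gender.filter_both_boys :
    univ.filter (fun f : Gender × Gender => f.1 = .B ∧ f.2 = .B) = {(.B, .B)} := by
  decide

theorem announceProb_mem_Icc {p : ℚ} (hp0 : 0 ≤ p) (hp1 : p ≤ 1) (f : Gender × Gender) :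
    0 ≤ announceProb p f ∧ announceProb p f ≤ 1 := by
  rcases f with ⟨_ | _, _ | _⟩ <;> simp only [announceProb] <;> constructor <;> linarith

theorem sum_announceProb (p : ℚ) : ∑ f, announceProb p f = 1 := by
  simp [Gender.sum_univ_prod, announceProb]

/-- For every rational `p ∈ [0,1]` there is a randomized announcement procedure
(`q f` = probability that family `f` says "at least one is a boy", with `q (G,G) = 0`)
such that the conditional probability of two boys given the announcement equals `p`. -/
theorem stmt_5 (p : ℚ) (hp0 : 0 ≤ p) (hp1 : p ≤ 1) :
    ∃ q : Gender × Gender → ℚ,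
      (∀ f, 0 ≤ q f ∧ q f ≤ 1) ∧
      q (Gender.G, Gender.G) = 0 ∧
      0 < ∑ f : Gender × Gender, q f ∧
      (∑ f ∈ Finset.univ.filter (fun f : Gender × Gender =>
          f.1 = Gender.B ∧ f.2 = Gender.B), q f) / (∑ f : Gender × Gender, q f) = p := by
  refine ⟨announceProb p, announceProb_mem_Icc hp0 hp1, rfl, ?_, ?_⟩
  · rw [sum_announceProb]
    exact one_pos
  · rw [sum_announceProb, Gender.filter_both_boys, sum_singleton, div_one]
    rfl
end

section
/- In the gender-neutral, day-neutral procedure, where a uniformly random child of a uniformly random family in ({B,G} × Fin 7)² is announced with its gender and birth day, the conditional probability of two boys given the announcement '(B, Tuesday)' equals 1/2. -/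
/-- A child is a (gender, weekday) pair; a family is a pair of children. -/
abbrev Child := Gender × Fin 7
abbrev Family := Child × Child

/-- Conditional probability under the uniform distribution on a finite type. -/
def condProb {α : Type*} [Fintype α] (A E : α → Prop) [DecidablePred A] [DecidablePred E] : ℚ :=
  ((Finset.univ.filter fun s => A s ∧ E s).card : ℚ) / ((Finset.univ.filter E).card : ℚ)

/-- The announced child (gender, day): the coin picks which child. -/
def announced (x : Family × Bool) : Child :=
  if x.2 then x.1.1 else x.1.2

/-!
Once the announcement `c` is fixed, a sample is determined by the coin and the unannounced child,
and every such pair occurs. So the unannounced child is uniform on `Gender × Fin 7`, and when `c`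
is a boy, both children are boys exactly when it is a boy: 7 cases out of 14.
-/

open Finset

theorem card_filter_both_and_announced_eq (P : Child → Prop) [DecidablePred P] {c : Child}
    (hc : P c) :
    #{x : Family × Bool | (P x.1.1 ∧ P x.1.2) ∧ announced x = c} = 2 * #{y : Child | P y} := by
  rw [← Fintype.card_bool, ← card_univ, ← card_product]
  refine card_bij' (fun x _ => (x.2, if x.2 then x.1.2 else x.1.1))
    (fun p _ => if p.1 then ((c, p.2), true) else ((p.2, c), false)) ?_ ?_ ?_ ?_
  · rintro ⟨⟨a, b⟩, _ | _⟩ <;> simp only [mem_filter, Finset.mem_univ, true_and] <;>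
      simp +contextual [announced]
  · rintro ⟨_ | _, y⟩ <;> simp only [mem_product, mem_filter, Finset.mem_univ, true_and] <;>
      simp [announced, hc]
  · rintro ⟨⟨a, b⟩, _ | _⟩ <;> simp only [mem_filter, Finset.mem_univ, true_and] <;>
      simp +contextual [announced]
  · rintro ⟨_ | _, y⟩ <;> simp

theorem card_filter_announced_eq (c : Child) :
    #{x : Family × Bool | announced x = c} = 2 * Fintype.card Child := by
  simpa using card_filter_both_and_announced_eq (fun _ => True) (c := c) trivial

theorem Gender.card_eq_two : Fintype.card Gender = 2 := rfl

theorem card_filter_gender_eq (g : Gender) : #{y : Child | y.1 = g} = 7 := by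
  cases g <;> rfl

theorem stmt_8 (t : Fin 7) :
    condProb (fun x : Family × Bool => x.1.1.1 = Gender.B ∧ x.1.2.1 = Gender.B)
      (fun x => announced x = (Gender.B, t)) = 1 / 2 := by
  rw [condProb, card_filter_both_and_announced_eq (fun y : Child => y.1 = Gender.B) rfl,
    card_filter_announced_eq, card_filter_gender_eq]
  norm_num [Gender.card_eq_two]
end

section
/- In the gender-neutral, Tuesday-centered procedure, where among families with at least one child born on Tuesday a uniformly random Tuesday-born child's gender is announced, the conditional probability of two boys given the announcement 'boy born on Tuesday' equals 1/2. -/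
/-- Tuesday-centered gender announcement: among children born on day t, a
uniformly chosen one (the coin decides if both qualify) has its gender announced. -/
def tGender (t : Fin 7) (x : Family × Bool) : Option Gender :=
  if x.1.1.2 = t ∧ x.1.2.2 = t then some (if x.2 then x.1.1.1 else x.1.2.1)
  else if x.1.1.2 = t then some x.1.1.1
  else if x.1.2.2 = t then some x.1.2.1
  else none

/-! Flipping the gender of the child whose gender is not announced leaves the announcement
unchanged and, once a boy is announced, exchanges "two boys" with "exactly one boy". Hence the two
cases are equally likely given the announcement. -/

theorem condProb_eq_half_of_involutive {α : Type*} [Fintype α] (A E : α → Prop)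
    [DecidablePred A] [DecidablePred E] (f : α → α) (hf : Function.Involutive f)
    (hE : ∀ x, E x → E (f x)) (hA : ∀ x, E x → (A (f x) ↔ ¬ A x)) (hne : ∃ x, E x) :
    condProb A E = 1 / 2 := by
  have h_swap : (Finset.univ.filter fun x => E x ∧ A x).card
      = (Finset.univ.filter fun x => E x ∧ ¬ A x).card :=
    Finset.card_nbij' f f (fun x hx => by simp_all) (fun x hx => by simp_all)
      (fun x _ => hf x) (fun x _ => hf x)
  have h_split := Finset.card_filter_add_card_filter_not (s := Finset.univ.filter E) A
  simp only [Finset.filter_filter, ← h_swap] at h_split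
  have h_pos : (Finset.univ.filter fun x => E x ∧ A x).card ≠ 0 := by
    obtain ⟨x, hx⟩ := hne
    have : 0 < (Finset.univ.filter E).card := Finset.card_pos.2 ⟨x, by simpa using hx⟩
    omega
  simp only [condProb, and_comm (a := A _), ← h_split]
  push_cast
  field_simp
  ring

def Gender.swap : Gender → Gender
  | .B => .G
  | .G => .B

@[simp] theorem Gender.swap_swap (g : Gender) : g.swap.swap = g := by cases g <;> rfl

@[simp] theorem Gender.swap_eq_B_iff (g : Gender) : g.swap = .B ↔ g ≠ .B := by cases g <;> decide

def swapUnannounced (t : Fin 7) (x : Family × Bool) : Family × Bool :=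
  if x.1.1.2 = t ∧ (x.1.2.2 = t → x.2 = true) then ((x.1.1, (x.1.2.1.swap, x.1.2.2)), x.2)
  else (((x.1.1.1.swap, x.1.1.2), x.1.2), x.2)

theorem swapUnannounced_involutive (t : Fin 7) : Function.Involutive (swapUnannounced t) := by
  rintro ⟨⟨⟨g₁, d₁⟩, g₂, d₂⟩, b⟩
  by_cases h₁ : d₁ = t <;> by_cases h₂ : d₂ = t <;> cases b <;> simp [swapUnannounced, h₁, h₂]

theorem tGender_swapUnannounced (t : Fin 7) (x : Family × Bool) :
    tGender t (swapUnannounced t x) = tGender t x := by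
  rcases x with ⟨⟨⟨g₁, d₁⟩, g₂, d₂⟩, b⟩
  by_cases h₁ : d₁ = t <;> by_cases h₂ : d₂ = t <;> cases b <;>
    simp [swapUnannounced, tGender, h₁, h₂]

theorem bothBoys_swapUnannounced_iff {t : Fin 7} {x : Family × Bool}
    (hx : tGender t x = some .B) :
    ((swapUnannounced t x).1.1.1 = .B ∧ (swapUnannounced t x).1.2.1 = .B) ↔
      ¬ (x.1.1.1 = .B ∧ x.1.2.1 = .B) := by
  rcases x with ⟨⟨⟨g₁, d₁⟩, g₂, d₂⟩, b⟩
  by_cases h₁ : d₁ = t <;> by_cases h₂ : d₂ = t <;> cases b <;>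
    simp_all [swapUnannounced, tGender]

theorem stmt_10 (t : Fin 7) :
    condProb (fun x : Family × Bool => x.1.1.1 = Gender.B ∧ x.1.2.1 = Gender.B)
      (fun x => tGender t x = some Gender.B) = 1 / 2 :=
  condProb_eq_half_of_involutive _ _ (swapUnannounced t) (swapUnannounced_involutive t)
    (fun x hx => (tGender_swapUnannounced t x).trans hx)
    (fun _ hx => bothBoys_swapUnannounced_iff hx)
    ⟨(((.B, t), (.B, t)), true), by simp [tGender]⟩
end
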